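/- Let H ∈ ℝ^{m×n}, P ∈ ℝ^{n×n} symmetric positive semidefinite, R ∈ ℝ^{m×m} symmetric positive definite, and K = P Hᵀ (H P Hᵀ + R)^{-1} the Kalman gain. Then the updated covariance (I - K H) P is symmetric and positive semidefinite. -/
import Mathlib


open scoped Matrix

/-- The updated covariance (I - K H) P after a Kalman analysis step, with the
Kalman gain K = P Hᵀ (H P Hᵀ + R)⁻¹, is symmetric positive semidefinite. -/
theorem stmt_5 {m n : ℕ} (H : Matrix (Fin m) (Fin n) ℝ)
    (P : Matrix (Fin n) (Fin n) ℝ) (R : Matrix (Fin m) (Fin m) ℝ)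
    (hP : P.PosSemidef) (hR : R.PosDef)
    (K : Matrix (Fin n) (Fin m) ℝ) (hK : K = P * Hᵀ * (H * P * Hᵀ + R)⁻¹) :
    ((1 - K * H) * P).IsSymm ∧ ((1 - K * H) * P).PosSemidef := by
  have hPt : Pᵀ = P := by
    simpa [Matrix.conjTranspose_eq_transpose_of_trivial] using hP.isHermitian.eq
  have hRt : Rᵀ = R := by
    simpa [Matrix.conjTranspose_eq_transpose_of_trivial] using hR.isHermitian.eq
  have hHPHt : (H * P * Hᵀ).PosSemidef := by
    have := hP.mul_mul_conjTranspose_same H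
    simpa [Matrix.conjTranspose_eq_transpose_of_trivial] using this
  have hS : (H * P * Hᵀ + R).PosDef := Matrix.PosDef.posSemidef_add hHPHt hR
  set S := H * P * Hᵀ + R with hSdef
  have hSt : Sᵀ = S := by
    simpa [Matrix.conjTranspose_eq_transpose_of_trivial] using hS.isHermitian.eq
  have hSunit : IsUnit S.det := by
    simpa using hS.det_pos.ne'
  have hSinv : S⁻¹ * S = 1 := Matrix.nonsing_inv_mul _ hSunit
  have hKS : K * S = P * Hᵀ := by
    rw [hK, Matrix.mul_assoc, hSinv, Matrix.mul_one]
  have hKSKt : K * S * Kᵀ = P * Hᵀ * Kᵀ := by rw [hKS]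
  have expand : K * (H * (P * (Hᵀ * Kᵀ))) + K * (R * Kᵀ) = P * (Hᵀ * Kᵀ) := by
    have h := hKSKt
    rw [hSdef] at h
    simpa [Matrix.add_mul, Matrix.mul_add, Matrix.mul_assoc] using h
  have e1 : (1 - K * H) * P * (1 - K * H)ᵀ =
      P - K * (H * P) - (P * (Hᵀ * Kᵀ) - K * (H * (P * (Hᵀ * Kᵀ)))) := by
    simp [Matrix.transpose_sub, Matrix.transpose_one, Matrix.transpose_mul,
      Matrix.sub_mul, Matrix.mul_sub, Matrix.mul_assoc]
  have key : (1 - K * H) * P = (1 - K * H) * P * (1 - K * H)ᵀ + K * (R * Kᵀ) := by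
    rw [e1]
    have lhs : (1 - K * H) * P = P - K * (H * P) := by
      simp [Matrix.sub_mul, Matrix.mul_assoc]
    rw [lhs]
    rw [show P - K * (H * P) - (P * (Hᵀ * Kᵀ) - K * (H * (P * (Hᵀ * Kᵀ)))) + K * (R * Kᵀ)
        = P - K * (H * P) - P * (Hᵀ * Kᵀ) + (K * (H * (P * (Hᵀ * Kᵀ))) + K * (R * Kᵀ)) from by
      abel]
    rw [expand]
    abel
  have hsymm : ((1 - K * H) * P)ᵀ = (1 - K * H) * P := by
    conv_lhs => rw [key]
    conv_rhs => rw [key]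
    simp only [Matrix.transpose_add, Matrix.transpose_mul, Matrix.transpose_transpose,
      Matrix.transpose_sub, Matrix.transpose_one, hPt, hRt]
    simp [Matrix.mul_assoc]
  refine ⟨hsymm, ?_⟩
  rw [key]
  have h1 : ((1 - K * H) * P * (1 - K * H)ᵀ).PosSemidef := by
    have := hP.mul_mul_conjTranspose_same (1 - K * H)
    simpa [Matrix.conjTranspose_eq_transpose_of_trivial] using this
  have h2 : (K * (R * Kᵀ)).PosSemidef := by
    have := hR.posSemidef.mul_mul_conjTranspose_same K
    simpa [Matrix.conjTranspose_eq_transpose_of_trivial, Matrix.mul_assoc] using this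
  exact h1.add h2
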